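/- arXiv:1812.02283 — 4 statements merged into one kernel-verified Lean document; each statement's English description precedes it below -/
import Mathlib

section
/- Let r be a diagonal n×n complex matrix and s an n×n complex matrix with [r,s] + Iₙ = -ij for some column vector i and row vector j. Then the diagonal entries of r are pairwise distinct, and for all p ≠ q, s_{pq} · (r_{pp} - r_{qq}) = -i_p j_q. -/
open Matrix

namespace Matrix

variable {ι R : Type*} [Fintype ι] [DecidableEq ι] [CommRing R]

theorem diagonal_mul_sub_mul_diagonal_apply (d : ι → R) (A : Matrix ι ι R) (p q : ι) :
    (diagonal d * A - A * diagonal d) p q = (d p - d q) * A p q := by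
  rw [sub_apply, diagonal_mul, mul_diagonal]
  ring

section CommutatorAddOne

variable {d : ι → R} {s : Matrix ι ι R} {i j : ι → R}
  (h : diagonal d * s - s * diagonal d + 1 = -vecMulVec i j)
include h

theorem sub_mul_add_one_apply_of_commutator_add_one_eq_neg_vecMulVec (p q : ι) :
    (d p - d q) * s p q + (1 : Matrix ι ι R) p q = -(i p * j q) := by
  have hpq := congrFun (congrFun h p) q
  rwa [add_apply, diagonal_mul_sub_mul_diagonal_apply, neg_apply, vecMulVec_apply] at hpq

theorem sub_mul_apply_of_commutator_add_one_eq_neg_vecMulVec {p q : ι} (hpq : p ≠ q) :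
    (d p - d q) * s p q = -(i p * j q) := by
  simpa [one_apply_ne hpq] using sub_mul_add_one_apply_of_commutator_add_one_eq_neg_vecMulVec h p q

theorem mul_eq_neg_one_of_commutator_add_one_eq_neg_vecMulVec (p : ι) :
    i p * j p = -1 := by
  simpa [eq_neg_iff_add_eq_zero, add_comm] using
    sub_mul_add_one_apply_of_commutator_add_one_eq_neg_vecMulVec h p p

-- Each `i p` and `j q` is a unit, so `i p * j q ≠ 0`, whereas `d p = d q` would force it to vanish.
theorem injective_of_commutator_add_one_eq_neg_vecMulVec [Nontrivial R] : Function.Injective d := by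
  intro p q hdpq
  by_contra hpq
  have hunit : ∀ k, IsUnit (i k * j k) := fun k => by
    rw [mul_eq_neg_one_of_commutator_add_one_eq_neg_vecMulVec h]
    exact isUnit_one.neg
  have hzero : i p * j q = 0 := by
    simpa [hdpq] using (sub_mul_apply_of_commutator_add_one_eq_neg_vecMulVec h hpq).symm
  exact ((isUnit_of_mul_isUnit_left (hunit p)).mul
    (isUnit_of_mul_isUnit_right (hunit q))).ne_zero hzero

end CommutatorAddOne

end Matrix

/-- If `r = diagonal ρ` and `[r,s] + Iₙ = -i·j`, then the diagonal entries of `r` are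
pairwise distinct, and for `p ≠ q` we have `s_{pq} (ρ_p - ρ_q) = -i_p j_q`. -/
theorem stmt_5 (n : ℕ) (ρ : Fin n → ℂ) (s : Matrix (Fin n) (Fin n) ℂ)
    (i j : Fin n → ℂ)
    (h : diagonal ρ * s - s * diagonal ρ + 1 = -vecMulVec i j) :
    Function.Injective ρ ∧
      ∀ p q : Fin n, p ≠ q → s p q * (ρ p - ρ q) = -(i p * j q) :=
  ⟨injective_of_commutator_add_one_eq_neg_vecMulVec h, fun _ _ hpq =>
    (mul_comm _ _).trans (sub_mul_apply_of_commutator_add_one_eq_neg_vecMulVec h hpq)⟩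
end

section
/- Let r be an upper triangular n×n complex matrix with r_{aa} ≠ r_{a'a'} for some indices a < a'. Set x = -r_{aa'}/(r_{a'a'} - r_{aa}) and let b = Iₙ + x·E_{aa'} (elementary matrix). Then r' = b r b⁻¹ is upper triangular, has (a,a')-entry zero, agrees with r on all diagonal entries, and r'_{pq} = r_{pq} for all (p,q) with p > a, and for p = a with q < a', and for p < a with q ≠ a'. -/
/-!
Since `a ≠ a'`, the matrix unit `E = E_{aa'}` squares to zero, so `b⁻¹ = 1 - x E` and
`b r b⁻¹ = r + x E r - x r E - x² E r E`. Here `E r` is row `a'` of `r` moved to row `a`,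
`r E` is column `a` of `r` moved to column `a'`, and `E r E = r_{a'a} E` vanishes because `r` is
upper triangular. So conjugation only adds `x · (row a')` to row `a` and subtracts
`x · (column a)` from column `a'`, which leaves all the listed entries unchanged; at `(a,a')` it
gives `r_{aa'} + x (r_{a'a'} - r_{aa})`, which is zero by the choice of `x`.
-/

open Matrix

namespace Matrix

variable {l m n α : Type*} [Fintype m] [DecidableEq m]

theorem inv_one_add_single_of_ne [Fintype l] [DecidableEq l] [CommRing α] {i j : l} (hij : i ≠ j)
    (c : α) :
    (1 + single i j c)⁻¹ = 1 - single i j c := by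
  refine inv_eq_right_inv ?_
  have hsq : single i j c * single i j c = 0 := single_mul_single_of_ne c i j i hij.symm c
  rw [add_mul, one_mul, mul_sub, mul_one, hsq, sub_zero, sub_add_cancel]

theorem single_mul_apply [DecidableEq l] [Semiring α] (i : l) (j : m) (c : α) (r : Matrix m n α)
    (p : l) (q : n) :
    (single i j c * r) p q = if p = i then c * r j q else 0 := by
  split_ifs with hp
  · rw [hp, single_mul_apply_same]
  · exact single_mul_apply_of_ne c i j p q hp r

theorem mul_single_apply [DecidableEq n] [Semiring α] (i : m) (j : n) (c : α) (r : Matrix l m α)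
    (p : l) (q : n) :
    (r * single i j c) p q = if q = j then r p i * c else 0 := by
  split_ifs with hq
  · rw [hq, mul_single_apply_same]
  · exact mul_single_apply_of_ne c i j p q hq r

theorem one_add_single_mul_mul_one_sub_single_apply [Ring α] (i j : m) (c : α)
    (r : Matrix m m α) (p q : m) :
    ((1 + single i j c) * r * (1 - single i j c)) p q =
      r p q + (if p = i then c * r j q else 0) - (if q = j then r p i * c else 0)
        - (if p = i ∧ q = j then c * r j i * c else 0) := by
  simp only [add_mul, one_mul, mul_sub, mul_one, sub_apply, add_apply, single_mul_apply,
    mul_single_apply]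
  by_cases hp : p = i <;> by_cases hq : q = j <;> simp [hp, hq, mul_assoc, sub_sub]

end Matrix

/-- The key step producing the Jordan semicanonical form: conjugating an upper
triangular matrix `r` with `r_{aa} ≠ r_{a'a'}` (for `a < a'`) by
`b = Iₙ + x E_{aa'}` with `x = -r_{aa'}/(r_{a'a'} - r_{aa})` kills the
`(a,a')`-entry, keeps the matrix upper triangular with the same diagonal, and
does not change the entries in rows below `a`, in row `a` to the left of `a'`,
nor in rows above `a` outside column `a'`. -/
theorem stmt_9 (n : ℕ) (r : Matrix (Fin n) (Fin n) ℂ)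
    (hr : ∀ p q : Fin n, q < p → r p q = 0)
    (a a' : Fin n) (haa' : a < a') (hne : r a a ≠ r a' a')
    (x : ℂ) (hx : x = -r a a' / (r a' a' - r a a))
    (b : Matrix (Fin n) (Fin n) ℂ) (hb : b = 1 + Matrix.single a a' x)
    (r' : Matrix (Fin n) (Fin n) ℂ) (hr' : r' = b * r * b⁻¹) :
    (∀ p q : Fin n, q < p → r' p q = 0) ∧
    r' a a' = 0 ∧
    (∀ p : Fin n, r' p p = r p p) ∧
    (∀ p q : Fin n, a < p → r' p q = r p q) ∧
    (∀ q : Fin n, q < a' → r' a q = r a q) ∧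
    (∀ p q : Fin n, p < a → q ≠ a' → r' p q = r p q) := by
  have hr'_apply (p q : Fin n) : r' p q =
      r p q + (if p = a then x * r a' q else 0) - (if q = a' then r p a * x else 0) := by
    rw [hr', hb, inv_one_add_single_of_ne haa'.ne, one_add_single_mul_mul_one_sub_single_apply,
      hr a' a haa']
    simp
  have hr'_aa' : r' a a' = 0 := by
    rw [hr'_apply, if_pos rfl, if_pos rfl, hx]
    field_simp [sub_ne_zero.mpr hne.symm]
    ring
  -- the remaining claims are case splits on `p = a` and `q = a'`, closed by upper triangularity
  refine ⟨?_, hr'_aa', ?_, ?_, ?_, ?_⟩ <;> simp only [hr'_apply] <;> grind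
end

section
/- Every upper triangular n×n complex matrix r is conjugate, by an invertible upper triangular matrix, to a matrix M such that: whenever M_{aa} ≠ M_{a'a'} for a < a', one has M_{aa'} = 0. -/
/-!
Conjugating an upper triangular `M` by the transvection `1 + c E_{ij}` (`i < j`) keeps the
diagonal, adds `c (M_{jj} - M_{ii})` to the entry `(i, j)`, and otherwise only alters entries
to the right of it in row `i` or above it in column `j`. So when `M_{ii} ≠ M_{jj}` one such
conjugation clears `(i, j)`, and clearing the entries column by column from the left, each
column from the bottom up, never spoils an entry already cleared.
-/

open Matrix OrderDual

theorem imp_of_toLex_lt_toLex {ι : Type*} [LinearOrder ι] {i j p q : ι}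
    (h : toLex (q, toDual p) < toLex (j, toDual i)) : (p = i → q < j) ∧ (q = j → i < p) := by
  rw [Prod.Lex.toLex_lt_toLex, toDual_lt_toDual] at h
  constructor
  · rintro rfl
    rcases h with h | ⟨_, h⟩
    · exact h
    · exact absurd h (lt_irrefl p)
  · rintro rfl
    rcases h with h | ⟨_, h⟩
    · exact absurd h (lt_irrefl q)
    · exact h

namespace Matrix

section CommRing

variable {ι R : Type*} [Fintype ι] [DecidableEq ι] [LinearOrder ι] [CommRing R]

def IsBorelConj (M N : Matrix ι ι R) : Prop :=
  ∃ b : Matrix ι ι R, IsUnit b ∧ b.BlockTriangular id ∧ N = b * M * b⁻¹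

namespace IsBorelConj

theorem refl (M : Matrix ι ι R) : IsBorelConj M M :=
  ⟨1, isUnit_one, blockTriangular_one, by simp⟩

theorem trans {M N P : Matrix ι ι R} (hMN : IsBorelConj M N) (hNP : IsBorelConj N P) :
    IsBorelConj M P := by
  obtain ⟨b, hb, hbT, rfl⟩ := hMN
  obtain ⟨c, hc, hcT, rfl⟩ := hNP
  refine ⟨c * b, hc.mul hb, hcT.mul hbT, ?_⟩
  simp only [Matrix.mul_inv_rev, Matrix.mul_assoc]

theorem blockTriangular {M N : Matrix ι ι R} (h : IsBorelConj M N)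
    (hM : M.BlockTriangular id) : N.BlockTriangular id := by
  obtain ⟨b, hb, hbT, rfl⟩ := h
  have := hb.invertible
  exact (hbT.mul hM).mul (blockTriangular_inv_of_blockTriangular hbT)

theorem transvection_mul_mul_transvection_neg {i j : ι} (hij : i < j) (c : R)
    (M : Matrix ι ι R) : IsBorelConj M (transvection i j c * M * transvection i j (-c)) := by
  have hinv : transvection i j c * transvection i j (-c) = 1 := by
    rw [transvection_mul_transvection_same _ _ hij.ne, add_neg_cancel, transvection_zero]
  exact ⟨_, IsUnit.of_mul_eq_one _ hinv, blockTriangular_transvection hij.le c,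
    by rw [inv_eq_right_inv hinv]⟩

end IsBorelConj

theorem transvection_mul_mul_transvection_neg_apply {M : Matrix ι ι R}
    (hM : M.BlockTriangular id) {i j p q : ι} (c : R) (hp : p = i → q < j)
    (hq : q = j → i < p) :
    (transvection i j c * M * transvection i j (-c)) p q = M p q := by
  by_cases hqj : q = j
  · subst hqj
    have hip := hq rfl
    rw [mul_transvection_apply_same, transvection_mul_apply_of_ne _ _ _ _ hip.ne',
      transvection_mul_apply_of_ne _ _ _ _ hip.ne', hM hip, mul_zero, add_zero]
  · rw [mul_transvection_apply_of_ne _ _ _ _ hqj]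
    by_cases hpi : p = i
    · subst hpi
      rw [transvection_mul_apply_same, hM (hp rfl), mul_zero, add_zero]
    · rw [transvection_mul_apply_of_ne _ _ _ _ hpi]

theorem transvection_mul_mul_transvection_neg_apply_diag {M : Matrix ι ι R}
    (hM : M.BlockTriangular id) {i j : ι} (hij : i < j) (c : R) (p : ι) :
    (transvection i j c * M * transvection i j (-c)) p p = M p p :=
  transvection_mul_mul_transvection_neg_apply hM c (fun h => h ▸ hij) (fun h => h ▸ hij)

theorem transvection_mul_mul_transvection_neg_apply_same {M : Matrix ι ι R}
    (hM : M.BlockTriangular id) {i j : ι} (hij : i < j) (c : R) :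
    (transvection i j c * M * transvection i j (-c)) i j = M i j + c * (M j j - M i i) := by
  rw [mul_transvection_apply_same, transvection_mul_apply_same, transvection_mul_apply_same,
    hM hij]
  ring

end CommRing

section Field

variable {ι K : Type*} [Fintype ι] [DecidableEq ι] [LinearOrder ι] [Field K]

-- `toLex (j, toDual i)` orders the entry `(i, j)` by column, and within a column from the bottom up.
theorem exists_isBorelConj_apply_eq_zero_of_mem {M : Matrix ι ι K}
    (hM : M.BlockTriangular id) (s : Finset (ι ×ₗ ιᵒᵈ)) :
    ∃ N, IsBorelConj M N ∧
      ∀ i j, toLex (j, toDual i) ∈ s → i < j → N i i ≠ N j j → N i j = 0 := by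
  induction s using Finset.induction_on_max with
  | empty => exact ⟨M, .refl M, by simp⟩
  | insert x s hlt ih =>
    obtain ⟨N, hMN, hN⟩ := ih
    obtain ⟨j, i, rfl⟩ : ∃ (j : ι) (i : ι), x = toLex (j, toDual i) := ⟨_, _, rfl⟩
    by_cases hclear : i < j ∧ N i i ≠ N j j
    · obtain ⟨hij, hdiag⟩ := hclear
      have hNT := hMN.blockTriangular hM
      refine ⟨_, hMN.trans (.transvection_mul_mul_transvection_neg hij
        (N i j / (N i i - N j j)) N), fun p q hmem hpq hne => ?_⟩
      rw [transvection_mul_mul_transvection_neg_apply_diag hNT hij,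
        transvection_mul_mul_transvection_neg_apply_diag hNT hij] at hne
      rcases Finset.mem_insert.mp hmem with heq | hmem
      · obtain ⟨rfl, rfl⟩ : q = j ∧ p = i := by simpa using heq
        rw [transvection_mul_mul_transvection_neg_apply_same hNT hij]
        field_simp [sub_ne_zero.mpr hdiag]
        ring
      · obtain ⟨hp, hq⟩ := imp_of_toLex_lt_toLex (hlt _ hmem)
        rw [transvection_mul_mul_transvection_neg_apply hNT _ hp hq]
        exact hN p q hmem hpq hne
    · refine ⟨N, hMN, fun p q hmem hpq hne => ?_⟩
      rcases Finset.mem_insert.mp hmem with heq | hmem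
      · obtain ⟨rfl, rfl⟩ : q = j ∧ p = i := by simpa using heq
        exact absurd ⟨hpq, hne⟩ hclear
      · exact hN p q hmem hpq hne

theorem exists_isBorelConj_apply_eq_zero {M : Matrix ι ι K} (hM : M.BlockTriangular id) :
    ∃ N, IsBorelConj M N ∧ ∀ i j, i < j → N i i ≠ N j j → N i j = 0 := by
  obtain ⟨N, hMN, hN⟩ := exists_isBorelConj_apply_eq_zero_of_mem hM Finset.univ
  exact ⟨N, hMN, fun i j => hN i j (Finset.mem_univ _)⟩

end Field

end Matrix

/-- Weak Jordan `B`-semicanonical form: every upper triangular complex matrix is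
conjugate by an invertible upper triangular matrix to a matrix `M` with `M_{aa'} = 0`
whenever `a < a'` and `M_{aa} ≠ M_{a'a'}`. -/
theorem stmt_10 (n : ℕ) (r : Matrix (Fin n) (Fin n) ℂ)
    (hr : ∀ p q : Fin n, q < p → r p q = 0) :
    ∃ b : Matrix (Fin n) (Fin n) ℂ, IsUnit b ∧ (∀ p q : Fin n, q < p → b p q = 0) ∧
      ∀ a a' : Fin n, a < a' → (b * r * b⁻¹) a a ≠ (b * r * b⁻¹) a' a' →
        (b * r * b⁻¹) a a' = 0 := by
  obtain ⟨_, ⟨b, hb, hbT, rfl⟩, hN⟩ := exists_isBorelConj_apply_eq_zero hr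
  exact ⟨b, hb, hbT, hN⟩
end

section
/- Let r₀ be the single n×n Jordan block with eigenvalue λ, and suppose [r₀,s] + Iₙ = -ij for some n×n matrix s, column vector i, and row vector j. Then the matrix X = [r₀,s] + Iₙ is upper triangular, and exactly one diagonal entry of X is nonzero, equal to n. -/
/-! Write `N = r₀ - λ` for the nilpotent shift. Since `r₀` commutes with every power `N ^ d`,
`tr ([r₀, s] N ^ d) = 0`, so `tr (X N ^ d) = tr (N ^ d)`, which is `n` for `d = 0` and `0` for
`d > 0`. As `X = -i j`, the `d`-th sub-diagonal sum `∑ i (q + d) j q` therefore vanishes for every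
`d > 0`. If `a` is the last index with `i a ≠ 0` and `b` the first with `j b ≠ 0`, the sum for
`d = a - b` reduces to the single term `i a j b`; hence `a ≤ b`, so `X` is upper triangular and at
most one diagonal entry of `X` is nonzero. The trace `n` of `X` is that entry. -/

open Matrix Finset

namespace Matrix

variable {R : Type*}

def upperShift (n : ℕ) [Zero R] [One R] : Matrix (Fin n) (Fin n) R :=
  of fun p q => if (p : ℕ) + 1 = q then 1 else 0

theorem upperShift_apply [Zero R] [One R] {n : ℕ} (p q : Fin n) :
    (upperShift n : Matrix (Fin n) (Fin n) R) p q = if (p : ℕ) + 1 = q then 1 else 0 := rfl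

theorem upperShift_pow_apply [Semiring R] {n : ℕ} (d : ℕ) (p q : Fin n) :
    (upperShift n ^ d : Matrix (Fin n) (Fin n) R) p q = if (p : ℕ) + d = q then 1 else 0 := by
  induction d generalizing q with
  | zero => simp [one_apply, Fin.val_inj]
  | succ d ih =>
    simp only [pow_succ, mul_apply, ih, upperShift_apply, ite_mul, one_mul, zero_mul]
    by_cases hlt : (p : ℕ) + d < n
    · rw [Finset.sum_eq_single ⟨(p : ℕ) + d, hlt⟩
        (fun k _ hk => if_neg fun e => hk (Fin.ext e.symm)) (by simp)]
      simp [add_assoc]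
    · rw [if_neg (by omega), Finset.sum_eq_zero fun k _ => if_neg (by omega)]

theorem trace_upperShift_pow [Semiring R] {n d : ℕ} (hd : d ≠ 0) :
    trace (upperShift n ^ d : Matrix (Fin n) (Fin n) R) = 0 :=
  Finset.sum_eq_zero fun p _ => by rw [diag_apply, upperShift_pow_apply, if_neg (by omega)]

theorem trace_mul_upperShift_pow [Semiring R] {n : ℕ} (A : Matrix (Fin n) (Fin n) R) (d : ℕ) :
    trace (A * upperShift n ^ d) =
      ∑ p : Fin n, ∑ q : Fin n, if (q : ℕ) + d = p then A p q else 0 := by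
  simp [trace, mul_apply, upperShift_pow_apply]

theorem trace_commutator_mul_eq_zero [CommRing R] {m : Type*} [Fintype m]
    {A C : Matrix m m R} (B : Matrix m m R) (h : Commute A C) :
    trace ((A * B - B * A) * C) = 0 := by
  rw [sub_mul, trace_sub, mul_assoc, trace_mul_comm, mul_assoc, ← h.eq, mul_assoc, sub_self]

theorem le_of_trace_vecMulVec_mul_upperShift_pow_eq_zero [Semiring R] [NoZeroDivisors R]
    {n : ℕ} {u v : Fin n → R}
    (h : ∀ d ≠ 0, trace (vecMulVec u v * upperShift n ^ d) = 0)
    {p q : Fin n} (hp : u p ≠ 0) (hq : v q ≠ 0) : p ≤ q := by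
  classical
  obtain ⟨a, ha, le_a⟩ := (univ.filter (u · ≠ 0)).exists_max_image id ⟨p, by simpa using hp⟩
  obtain ⟨b, hb, b_le⟩ := (univ.filter (v · ≠ 0)).exists_min_image id ⟨q, by simpa using hq⟩
  simp only [mem_filter, mem_univ, true_and, id] at ha hb le_a b_le
  by_contra! hqp
  have hba : (b : ℕ) < a := (b_le q hq).trans_lt (hqp.trans_le (le_a p hp))
  have hpair : ∀ p' q' : Fin n, (q' : ℕ) + (a - b) = p' → u p' * v q' ≠ 0 → p' = a ∧ q' = b := by
    intro p' q' hd hne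
    have h₁ : (p' : ℕ) ≤ a := le_a p' (left_ne_zero_of_mul hne)
    have h₂ : (b : ℕ) ≤ q' := b_le q' (right_ne_zero_of_mul hne)
    exact ⟨Fin.ext (by omega), Fin.ext (by omega)⟩
  have hterm : ∀ p' q' : Fin n, (if (q' : ℕ) + (a - b) = p' then u p' * v q' else 0) =
      if p' = a ∧ q' = b then u a * v b else 0 := by
    intro p' q'
    by_cases hab : p' = a ∧ q' = b
    · rw [if_pos hab, hab.1, hab.2, if_pos (by omega)]
    · rw [if_neg hab, ite_eq_right_iff]
      exact fun hd => not_not.mp fun hne => hab (hpair p' q' hd hne)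
  simpa [trace_mul_upperShift_pow, vecMulVec_apply, hterm, ite_and, ha, hb]
    using h (a - b : ℕ) (by omega)

end Matrix

theorem Fintype.exists_apply_eq_sum_of_support_subsingleton {ι M : Type*} [Fintype ι]
    [AddCommMonoid M] {f : ι → M} (hf : ∀ p q, f p ≠ 0 → f q ≠ 0 → p = q)
    (hs : ∑ p, f p ≠ 0) : ∃ p, f p = ∑ p, f p ∧ ∀ q, q ≠ p → f q = 0 := by
  obtain ⟨p, -, hp⟩ := Finset.exists_ne_zero_of_sum_ne_zero hs
  have hzero : ∀ q, q ≠ p → f q = 0 := fun q hqp => by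
    by_contra hq
    exact hqp (hf q p hq hp)
  exact ⟨p, (Fintype.sum_eq_single p hzero).symm, hzero⟩

/-- If `r₀` is a single `n × n` Jordan block and `[r₀,s] + Iₙ = -i·j`, then
`X = [r₀,s] + Iₙ` is upper triangular and exactly one diagonal entry of `X` is
nonzero, equal to `n`. -/
theorem stmt_17 (n : ℕ) (hn : 0 < n) (l : ℂ) (r₀ : Matrix (Fin n) (Fin n) ℂ)
    (hr₀ : ∀ p q : Fin n, r₀ p q =
      if (p : ℕ) + 1 = q then 1 else if p = q then l else 0)
    (s : Matrix (Fin n) (Fin n) ℂ) (i j : Fin n → ℂ)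
    (h : r₀ * s - s * r₀ + 1 = -vecMulVec i j)
    (X : Matrix (Fin n) (Fin n) ℂ) (hX : X = r₀ * s - s * r₀ + 1) :
    (∀ p q : Fin n, q < p → X p q = 0) ∧
      ∃ p : Fin n, X p p = (n : ℂ) ∧ ∀ q : Fin n, q ≠ p → X q q = 0 := by
  have hN : r₀ - l • 1 = upperShift n := by
    ext p q
    rcases eq_or_ne p q with rfl | hpq
    · simp [hr₀, upperShift_apply]
    · simp [hr₀, upperShift_apply, hpq, one_apply]
  have hcomm : ∀ d, Commute r₀ (upperShift n ^ d) := fun d => by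
    rw [← hN]
    exact ((Commute.refl r₀).sub_right ((Commute.one_right r₀).smul_right l)).pow_right d
  have htrace : ∀ d, trace (X * upperShift n ^ d) = trace (upperShift n ^ d) := fun d => by
    rw [hX, add_mul, trace_add, trace_commutator_mul_eq_zero s (hcomm d), one_mul, zero_add]
  have hle : ∀ p q, i p ≠ 0 → j q ≠ 0 → p ≤ q := fun p q =>
    le_of_trace_vecMulVec_mul_upperShift_pow_eq_zero fun d hd => by
      rw [← neg_neg (vecMulVec i j), ← h, ← hX, neg_mul, trace_neg, htrace,
        trace_upperShift_pow hd, neg_zero]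
  have hsupp : ∀ p q, X p q ≠ 0 → i p ≠ 0 ∧ j q ≠ 0 := fun p q hpq => by
    rw [hX, h, neg_apply, vecMulVec_apply, neg_ne_zero] at hpq
    exact ⟨left_ne_zero_of_mul hpq, right_ne_zero_of_mul hpq⟩
  refine ⟨fun p q hqp => ?_, ?_⟩
  · by_contra hpq
    exact (hle p q (hsupp p q hpq).1 (hsupp p q hpq).2).not_gt hqp
  · have htr : ∑ p, X p p = n := by simpa [trace] using htrace 0
    obtain ⟨p, hp, hzero⟩ := Fintype.exists_apply_eq_sum_of_support_subsingleton
      (f := fun p => X p p)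
      (fun p q hp hq => (hle p q (hsupp p p hp).1 (hsupp q q hq).2).antisymm
        (hle q p (hsupp q q hq).1 (hsupp p p hp).2))
      (htr ▸ Nat.cast_ne_zero.mpr hn.ne')
    exact ⟨p, hp.trans htr, hzero⟩
end
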